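/- arXiv:2106.12997 — 2 statements merged into one kernel-verified Lean document; each statement's English description precedes it below -/
import Mathlib

section
/- Uniform convergence of Lipschitz Monte Carlo approximations: under the assumptions that X is compact and the sampled objectives are uniformly Lipschitz with integrable Lipschitz random constant, the sample average approximation α̂_N(x) = (1/N) Σ φ(x, ε_i) converges to α(x) = E[φ(x, ε)] uniformly on X almost surely, and hence sup_X α̂_N → sup_X α almost surely. -/
/-!
The random constant `ℓ` need not be measurable, so it is replaced by the supremum `g e` of the
difference quotients of `φ(·, e)` over a countable dense subset `D` of `X`: this is measurable,
at most `max ℓ 0`, and still a Lipschitz constant on `X`. The strong law then holds almost surely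
at every point of `D` at once and for the averages of the `g(ε_i)`; on that event the `α̂_N` are
Lipschitz on `X` with one common constant, so convergence on the dense set `D` upgrades to
uniform convergence on the compact set `X`, and uniform convergence carries the suprema along.
-/

open MeasureTheory ProbabilityTheory Filter Set Topology

/-- `α̂_N` along the sample path `e`; at `N = 0` it is `0`. -/
noncomputable def sampleMean {β : Type*} (h : β → ℝ) (e : ℕ → β) (N : ℕ) : ℝ :=
  (N : ℝ)⁻¹ * ∑ i ∈ Finset.range N, h (e i)

section Lipschitz

variable {α β : Type*} [PseudoMetricSpace α] [PseudoMetricSpace β]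

theorem LipschitzOnWith.of_subset_closure {K : NNReal} {f : α → β} {s D : Set α}
    (hf : ContinuousOn f s) (hD : D ⊆ s) (hsD : s ⊆ closure D) (h : LipschitzOnWith K f D) :
    LipschitzOnWith K f s := by
  rw [lipschitzOnWith_iff_restrict]
  refine LipschitzWith.of_dist_le_mul fun x y => ?_
  have hdense : Dense (((↑) : s → α) ⁻¹' D) :=
    Subtype.dense_iff.2 (by rwa [Subtype.image_preimage_coe, inter_eq_right.2 hD])
  have hcont : Continuous (s.domRestrict f) := hf.domRestrict
  refine le_on_closure (s := (((↑) : s → α) ⁻¹' D) ×ˢ (((↑) : s → α) ⁻¹' D))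
    (f := fun p => dist (s.domRestrict f p.1) (s.domRestrict f p.2))
    (g := fun p => K * dist p.1 p.2)
    (fun p hp => h.dist_le_mul _ hp.1 _ hp.2) (by fun_prop) (by fun_prop) (x := (x, y)) ?_
  rw [(hdense.prod hdense).closure_eq]
  trivial

/-- This is `0` when the quotients are unbounded, and pairs at distance `0` contribute `0`. -/
noncomputable def slopeSup (D : Set α) (f : α → β) : ℝ :=
  ⨆ p : D × D, dist (f p.1) (f p.2) / dist (p.1 : α) p.2

variable {D s : Set α} {f : α → β} {K : ℝ}

theorem slopeSup_nonneg : 0 ≤ slopeSup D f :=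
  Real.iSup_nonneg fun _ => div_nonneg dist_nonneg dist_nonneg

theorem div_dist_le_max {x y : α} (h : dist (f x) (f y) ≤ K * dist x y) :
    dist (f x) (f y) / dist x y ≤ max K 0 :=
  div_le_of_le_mul₀ dist_nonneg (le_max_right _ _) (h.trans (by gcongr; exact le_max_left _ _))

theorem slopeSup_le (h : ∀ x ∈ D, ∀ y ∈ D, dist (f x) (f y) ≤ K * dist x y) :
    slopeSup D f ≤ max K 0 :=
  Real.iSup_le (fun p => div_dist_le_max (h _ p.1.2 _ p.2.2)) (le_max_right _ _)

theorem dist_le_slopeSup_mul (hD : D ⊆ s) (hsD : s ⊆ closure D)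
    (h : ∀ x ∈ s, ∀ y ∈ s, dist (f x) (f y) ≤ K * dist x y) :
    ∀ x ∈ s, ∀ y ∈ s, dist (f x) (f y) ≤ slopeSup D f * dist x y := by
  have hbdd : BddAbove (range fun p : D × D => dist (f p.1) (f p.2) / dist (p.1 : α) p.2) :=
    ⟨max K 0, forall_mem_range.2 fun p => div_dist_le_max (h _ (hD p.1.2) _ (hD p.2.2))⟩
  have hlipD : LipschitzOnWith (slopeSup D f).toNNReal f D := by
    refine LipschitzOnWith.of_dist_le' fun x hx y hy => ?_
    rcases eq_or_lt_of_le (dist_nonneg : 0 ≤ dist x y) with hxy | hxy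
    · simpa [← hxy] using h x (hD hx) y (hD hy)
    · rw [← div_le_iff₀ hxy]
      exact le_ciSup hbdd ((⟨x, hx⟩, ⟨y, hy⟩) : D × D)
  intro x hx y hy
  have := ((hlipD.of_subset_closure (LipschitzOnWith.of_dist_le' h).continuousOn hD hsD)
    |>.dist_le_mul x hx y hy)
  rwa [Real.coe_toNNReal _ slopeSup_nonneg] at this

theorem measurable_slopeSup {γ : Type*} [MeasurableSpace γ] [MeasurableSpace β]
    [OpensMeasurableSpace β] [SecondCountableTopology β] (hD : D.Countable)
    {φ : α → γ → β} (hφ : ∀ x, Measurable (φ x)) :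
    Measurable fun e => slopeSup D (φ · e) := by
  have : Countable D := hD.to_subtype
  exact Measurable.iSup fun p => ((hφ p.1).dist (hφ p.2)).div_const _

end Lipschitz

section UniformConvergence

variable {α ι : Type*} [PseudoMetricSpace α]

theorem tendstoUniformlyOn_of_tendsto_on_dense {l : Filter ι} {s D : Set α} (hs : IsCompact s)
    (hD : D ⊆ s) (hsD : s ⊆ closure D) {F : ι → α → ℝ} {f : α → ℝ} {K : NNReal}
    (hF : ∀ n, LipschitzOnWith K (F n) s) (hf : LipschitzOnWith K f s)
    (hlim : ∀ y ∈ D, Tendsto (F · y) l (𝓝 (f y))) : TendstoUniformlyOn F f l s := by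
  rw [Metric.tendstoUniformlyOn_iff]
  intro η hη
  set r := η / (3 * (K + 1))
  have hr : 0 < r := by positivity
  have hKr : K * r ≤ η / 3 := by
    calc (K : ℝ) * r ≤ (K + 1) * r := by gcongr; linarith
      _ = η / 3 := by simp only [r]; field_simp
  have hcover : s ⊆ ⋃ y ∈ D, Metric.ball y r := fun x hx => by
    obtain ⟨y, hy, hxy⟩ := Metric.mem_closure_iff.1 (hsD hx) r hr
    exact mem_biUnion hy (Metric.mem_ball.2 hxy)
  obtain ⟨T, hTD, hTfin, hsT⟩ :=
    hs.elim_finite_subcover_image (fun _ _ => Metric.isOpen_ball) hcover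
  have hnet : ∀ᶠ n in l, ∀ y ∈ T, dist (F n y) (f y) < η / 3 :=
    (hTfin.eventually_all).2 fun y hy =>
      Metric.tendsto_nhds.1 (hlim y (hTD hy)) (η / 3) (by positivity)
  filter_upwards [hnet] with n hn x hx
  obtain ⟨y, hyT, hxy⟩ := mem_iUnion₂.1 (hsT hx)
  have hys := hD (hTD hyT)
  have hfxy : dist (f x) (f y) ≤ K * r :=
    (hf.dist_le_mul x hx y hys).trans (by gcongr; exact (Metric.mem_ball.1 hxy).le)
  have hFxy : dist (F n y) (F n x) ≤ K * r :=
    ((hF n).dist_le_mul y hys x hx).trans (by gcongr; exact (Metric.mem_ball'.1 hxy).le)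
  linarith [dist_triangle4 (f x) (f y) (F n y) (F n x), hn y hyT, dist_comm (F n y) (f y)]

end UniformConvergence

section Supremum

variable {α ι : Type*}

theorem abs_ciSup_sub_ciSup_le [Nonempty α] {F f : α → ℝ} (hf : BddAbove (range f)) {δ : ℝ}
    (h : ∀ x, |F x - f x| ≤ δ) : |(⨆ x, F x) - ⨆ x, f x| ≤ δ := by
  have hF : BddAbove (range F) :=
    ⟨(⨆ x, f x) + δ, forall_mem_range.2 fun x => by
      linarith [le_ciSup hf x, (abs_le.1 (h x)).2]⟩
  rw [abs_sub_le_iff, sub_le_iff_le_add, sub_le_iff_le_add]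
  constructor
  · exact ciSup_le fun x => by linarith [le_ciSup hf x, (abs_le.1 (h x)).2]
  · exact ciSup_le fun x => by linarith [le_ciSup hF x, (abs_le.1 (h x)).1]

/-- In `ℝ`, `⨆ x ∈ s, f x` is the supremum of `f` on `s` together with the value `0` taken at
each `x ∉ s`; the estimate survives this junk value. -/
theorem abs_biSup_sub_biSup_le [Nonempty α] {F f : α → ℝ} {s : Set α} (hf : BddAbove (f '' s))
    {δ : ℝ} (hδ : 0 ≤ δ) (h : ∀ x ∈ s, |F x - f x| ≤ δ) :
    |(⨆ x ∈ s, F x) - ⨆ x ∈ s, f x| ≤ δ := by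
  obtain ⟨B, hB⟩ := hf
  refine abs_ciSup_sub_ciSup_le ⟨max B 0, forall_mem_range.2 fun x => ?_⟩ fun x => ?_
  all_goals by_cases hx : x ∈ s
  · simpa [hx] using le_max_of_le_left (hB (mem_image_of_mem f hx))
  · simp [hx]
  · simpa [hx] using h x hx
  · simpa [hx] using hδ

variable {l : Filter ι} {s : Set α} {F : ι → α → ℝ} {f : α → ℝ}

theorem TendstoUniformlyOn.tendsto_biSup_abs_sub (h : TendstoUniformlyOn F f l s) :
    Tendsto (fun n => ⨆ x ∈ s, |F n x - f x|) l (𝓝 0) := by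
  rw [Metric.tendstoUniformlyOn_iff] at h
  refine Metric.tendsto_nhds.2 fun η hη => ?_
  filter_upwards [h (η / 2) (half_pos hη)] with n hn
  have hsup : (⨆ x ∈ s, |F n x - f x|) ≤ η / 2 :=
    Real.iSup_le (fun x => Real.iSup_le (fun hx => by
      simpa [Real.dist_eq, abs_sub_comm] using (hn x hx).le) (half_pos hη).le) (half_pos hη).le
  rw [Real.dist_eq, sub_zero, abs_of_nonneg (Real.iSup_nonneg fun x => Real.iSup_nonneg fun _ =>
    abs_nonneg _)]
  linarith

theorem TendstoUniformlyOn.tendsto_biSup [Nonempty α] (h : TendstoUniformlyOn F f l s)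
    (hf : BddAbove (f '' s)) :
    Tendsto (fun n => ⨆ x ∈ s, F n x) l (𝓝 (⨆ x ∈ s, f x)) := by
  rw [Metric.tendstoUniformlyOn_iff] at h
  refine Metric.tendsto_nhds.2 fun η hη => ?_
  filter_upwards [h (η / 2) (half_pos hη)] with n hn
  rw [Real.dist_eq]
  refine (abs_biSup_sub_biSup_le hf (half_pos hη).le fun x hx => ?_).trans_lt (half_lt_self hη)
  simpa [Real.dist_eq, abs_sub_comm] using (hn x hx).le

end Supremum

section SampleMean

variable {α β : Type*} [PseudoMetricSpace α]

theorem dist_sampleMean_le {φ : α → β → ℝ} {c : β → ℝ} {e : ℕ → β} {s : Set α}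
    (h : ∀ i, ∀ x ∈ s, ∀ y ∈ s, dist (φ x (e i)) (φ y (e i)) ≤ c (e i) * dist x y)
    (N : ℕ) {x y : α} (hx : x ∈ s) (hy : y ∈ s) :
    dist (sampleMean (φ x) e N) (sampleMean (φ y) e N) ≤ sampleMean c e N * dist x y := by
  simp only [sampleMean, Real.dist_eq, ← mul_sub, ← Finset.sum_sub_distrib, abs_mul, abs_inv,
    Nat.abs_cast, mul_assoc, Finset.sum_mul]
  gcongr
  exact (Finset.abs_sum_le_sum_abs _ _).trans
    (Finset.sum_le_sum fun i _ => by simpa [Real.dist_eq] using h i x hx y hy)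

theorem tendstoUniformlyOn_sampleMean {s D : Set α} (hs : IsCompact s) (hD : D ⊆ s)
    (hsD : s ⊆ closure D) {φ : α → β → ℝ} {f : α → ℝ} {c : β → ℝ} {e : ℕ → β} {K : ℝ}
    (hlim : ∀ y ∈ D, Tendsto (sampleMean (φ y) e) atTop (𝓝 (f y)))
    (hc : Tendsto (sampleMean c e) atTop (𝓝 K))
    (hφ : ∀ i, ∀ x ∈ s, ∀ y ∈ s, dist (φ x (e i)) (φ y (e i)) ≤ c (e i) * dist x y)
    (hf : ∀ x ∈ s, ∀ y ∈ s, dist (f x) (f y) ≤ K * dist x y) :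
    TendstoUniformlyOn (fun N x => sampleMean (φ x) e N) f atTop s := by
  obtain ⟨C, hC⟩ := hc.bddAbove_range
  have hCN : ∀ N, sampleMean c e N ≤ C := fun N => hC (mem_range_self N)
  have hKC : K ≤ C := le_of_tendsto' hc hCN
  refine tendstoUniformlyOn_of_tendsto_on_dense hs hD hsD (K := C.toNNReal)
    (fun N => LipschitzOnWith.of_dist_le' fun x hx y hy => ?_)
    (LipschitzOnWith.of_dist_le' fun x hx y hy => ?_) hlim
  · exact (dist_sampleMean_le hφ N hx hy).trans (by gcongr; exact hCN N)
  · exact (hf x hx y hy).trans (by gcongr)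

end SampleMean

theorem ae_tendsto_sampleMean {Ω β : Type*} [MeasurableSpace Ω] [MeasurableSpace β]
    {P : Measure Ω} {ε : ℕ → Ω → β} (hident : ∀ i, IdentDistrib (ε i) (ε 0) P P)
    (hindep : iIndepFun ε P) {h : β → ℝ} (hh : Measurable h)
    (hint : Integrable (fun ω => h (ε 0 ω)) P) :
    ∀ᵐ ω ∂P, Tendsto (sampleMean h (ε · ω)) atTop (𝓝 (∫ ω, h (ε 0 ω) ∂P)) := by
  filter_upwards [strong_law_ae_real (fun i ω => h (ε i ω)) hint
    (fun i j hij => (hindep.indepFun hij).comp hh hh) fun i => (hident i).comp hh] with ω hω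
  rw [funext fun n => div_eq_inv_mul _ _] at hω
  exact hω

theorem dist_integral_le_integral_mul {Ω : Type*} [MeasurableSpace Ω] {P : Measure Ω}
    {f g c : Ω → ℝ} (hf : Integrable f P) (hg : Integrable g P) (hc : Integrable c P) {r : ℝ}
    (h : ∀ᵐ ω ∂P, dist (f ω) (g ω) ≤ c ω * r) :
    dist (∫ ω, f ω ∂P) (∫ ω, g ω ∂P) ≤ (∫ ω, c ω ∂P) * r := by
  rw [Real.dist_eq, ← integral_sub hf hg, ← integral_mul_const]
  exact abs_integral_le_integral_abs.trans
    (integral_mono_ae (hf.sub hg).abs (hc.mul_const r) h)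

theorem saa_uniform_convergence_general {Ω : Type*} [MeasurableSpace Ω]
    (P : Measure Ω) {d k : ℕ}
    (X : Set (EuclideanSpace ℝ (Fin d))) (hX : IsCompact X)
    (ε : ℕ → Ω → EuclideanSpace ℝ (Fin k))
    (hmeas : ∀ i, Measurable (ε i))
    (hident : ∀ i, Measure.map (ε i) P = Measure.map (ε 0) P)
    (hindep : iIndepFun ε P)
    (φ : EuclideanSpace ℝ (Fin d) → EuclideanSpace ℝ (Fin k) → ℝ)
    (hφ : Measurable (Function.uncurry φ))
    (ℓ : EuclideanSpace ℝ (Fin k) → ℝ)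
    (hint : ∀ x ∈ X, Integrable (fun ω => φ x (ε 0 ω)) P)
    (hℓ : Integrable (fun ω => ℓ (ε 0 ω)) P)
    (hlip : ∀ᵐ e ∂(Measure.map (ε 0) P), ∀ x ∈ X, ∀ x' ∈ X,
      |φ x e - φ x' e| ≤ ℓ e * ‖x - x'‖) :
    ∀ᵐ ω ∂P,
      Tendsto (fun N : ℕ =>
          ⨆ x ∈ X, |(↑N)⁻¹ * ∑ i ∈ Finset.range N, φ x (ε i ω)
            - ∫ ω', φ x (ε 0 ω') ∂P|) atTop (nhds 0) ∧
      Tendsto (fun N : ℕ =>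
          ⨆ x ∈ X, (↑N)⁻¹ * ∑ i ∈ Finset.range N, φ x (ε i ω)) atTop
        (nhds (⨆ x ∈ X, ∫ ω', φ x (ε 0 ω') ∂P)) := by
  obtain ⟨D, hDX, hDc, hXD⟩ := EMetric.subset_countable_closure_of_compact hX
  have hφx : ∀ x, Measurable (φ x) := fun x => hφ.comp measurable_prodMk_left
  set g := fun e => slopeSup D (φ · e)
  have hgood : ∀ᵐ e ∂(Measure.map (ε 0) P), g e ≤ max (ℓ e) 0 ∧
      ∀ x ∈ X, ∀ y ∈ X, dist (φ x e) (φ y e) ≤ g e * dist x y := by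
    filter_upwards [hlip] with e he
    exact ⟨slopeSup_le fun x hx y hy => he x (hDX hx) y (hDX hy), dist_le_slopeSup_mul hDX hXD he⟩
  have hg := fun i => ae_of_ae_map (hmeas i).aemeasurable (hident i ▸ hgood)
  have hgint : Integrable (fun ω => g (ε 0 ω)) P :=
    hℓ.pos_part.mono' ((measurable_slopeSup hDc hφx).comp (hmeas 0)).aestronglyMeasurable
      ((hg 0).mono fun _ hω => (abs_of_nonneg slopeSup_nonneg).trans_le hω.1)
  have hα : ∀ x ∈ X, ∀ y ∈ X, dist (∫ ω, φ x (ε 0 ω) ∂P) (∫ ω, φ y (ε 0 ω) ∂P) ≤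
      (∫ ω, g (ε 0 ω) ∂P) * dist x y := fun x hx y hy =>
    dist_integral_le_integral_mul (hint x hx) (hint y hy) hgint
      ((hg 0).mono fun ω hω => hω.2 x hx y hy)
  have hid : ∀ i, IdentDistrib (ε i) (ε 0) P P :=
    fun i => ⟨(hmeas i).aemeasurable, (hmeas 0).aemeasurable, hident i⟩
  filter_upwards [(ae_ball_iff hDc).2 fun t ht =>
      ae_tendsto_sampleMean hid hindep (hφx t) (hint t (hDX ht)),
    ae_tendsto_sampleMean hid hindep (measurable_slopeSup hDc hφx) hgint,
    ae_all_iff.2 fun i => (hg i).mono fun _ h => h.2] with ω hlimD hlimg hlipω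
  have hunif := tendstoUniformlyOn_sampleMean hX hDX hXD hlimD hlimg hlipω hα
  exact ⟨hunif.tendsto_biSup_abs_sub,
    hunif.tendsto_biSup (hX.bddAbove_image (LipschitzOnWith.of_dist_le' hα).continuousOn)⟩

/-- Uniform convergence of Lipschitz Monte Carlo (SAA) approximations: on a
compact set `X`, with i.i.d. samples `ε_i` and sampled objectives that are
uniformly Lipschitz with an integrable random Lipschitz constant, the sample
average `α̂_N(x) = (1/N) ∑ φ(x, ε_i)` converges to `α(x) = E[φ(x, ε)]`
uniformly on `X` almost surely, and hence `sup_X α̂_N → sup_X α` a.s. -/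
theorem saa_uniform_convergence {Ω : Type*} [MeasurableSpace Ω]
    (P : Measure Ω) [IsProbabilityMeasure P] {d k : ℕ}
    (X : Set (EuclideanSpace ℝ (Fin d))) (hX : IsCompact X)
    (ε : ℕ → Ω → EuclideanSpace ℝ (Fin k))
    (hmeas : ∀ i, Measurable (ε i))
    (hident : ∀ i, Measure.map (ε i) P = Measure.map (ε 0) P)
    (hindep : iIndepFun ε P)
    (φ : EuclideanSpace ℝ (Fin d) → EuclideanSpace ℝ (Fin k) → ℝ)
    (hφ : Measurable (Function.uncurry φ))
    (ℓ : EuclideanSpace ℝ (Fin k) → ℝ)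
    (hint : ∀ x ∈ X, Integrable (fun ω => φ x (ε 0 ω)) P)
    (hℓ : Integrable (fun ω => ℓ (ε 0 ω)) P)
    (hlip : ∀ᵐ e ∂(Measure.map (ε 0) P), ∀ x ∈ X, ∀ x' ∈ X,
      |φ x e - φ x' e| ≤ ℓ e * ‖x - x'‖) :
    ∀ᵐ ω ∂P,
      Tendsto (fun N : ℕ =>
          ⨆ x ∈ X, |(↑N)⁻¹ * ∑ i ∈ Finset.range N, φ x (ε i ω)
            - ∫ ω', φ x (ε 0 ω') ∂P|) atTop (nhds 0) ∧
      Tendsto (fun N : ℕ =>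
          ⨆ x ∈ X, (↑N)⁻¹ * ∑ i ∈ Finset.range N, φ x (ε i ω)) atTop
        (nhds (⨆ x ∈ X, ∫ ω', φ x (ε 0 ω') ∂P)) :=
  saa_uniform_convergence_general P X hX ε hmeas hident hindep φ hφ ℓ hint hℓ hlip
end

section
/- Structured-noise Kronecker inverse: for symmetric K1 (n×n), K2 (t×t) and symmetric positive definite Σ_X (n×n), Σ_T (t×t), with eigendecompositions Σ_X = Q_X Λ_X Q_X^T, Σ_T = Q_T Λ_T Q_T^T, and secondary eigendecompositions Q̃_1 Λ̃_1 Q̃_1^T = Λ_X^{-1/2} Q_X^T K1 Q_X Λ_X^{-1/2} and Q̃_2 Λ̃_2 Q̃_2^T = Λ_T^{-1/2} Q_T^T K2 Q_T Λ_T^{-1/2}, we have (K1 ⊗ K2 + Σ_X ⊗ Σ_T)^{-1} = (Q_X Λ_X^{1/2} ⊗ Q_T Λ_T^{1/2})^{-T} (Q̃_1 ⊗ Q̃_2)(Λ̃_1 ⊗ Λ̃_2 + I)^{-1}(Q̃_1 ⊗ Q̃_2)^T (Q_X Λ_X^{1/2} ⊗ Q_T Λ_T^{1/2})^{-1}, assuming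 Λ̃_1 ⊗ Λ̃_2 + I is invertible. -/
open Matrix
open scoped Kronecker

/-- Structured-noise Kronecker inverse (Rakitsch et al.): with
`Σ_X = Q_X Λ_X Q_Xᵀ`, `Σ_T = Q_T Λ_T Q_Tᵀ` positive definite, `S_X = Λ_X^{1/2}`,
`S_T = Λ_T^{1/2}`, and whitened eigendecompositions
`Q̃1 Λ̃1 Q̃1ᵀ = S_X⁻¹ Q_Xᵀ K1 Q_X S_X⁻¹`, `Q̃2 Λ̃2 Q̃2ᵀ = S_T⁻¹ Q_Tᵀ K2 Q_T S_T⁻¹`,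
`(K1 ⊗ K2 + Σ_X ⊗ Σ_T)⁻¹
  = ((Q_X S_X ⊗ Q_T S_T)ᵀ)⁻¹ (Q̃1 ⊗ Q̃2)(Λ̃1 ⊗ Λ̃2 + I)⁻¹(Q̃1 ⊗ Q̃2)ᵀ (Q_X S_X ⊗ Q_T S_T)⁻¹`. -/
theorem structured_noise_kronecker_inverse {n t : ℕ}
    (K1 SigX QX ΛX SX Qt1 Λt1 : Matrix (Fin n) (Fin n) ℝ)
    (K2 SigT QT ΛT ST Qt2 Λt2 : Matrix (Fin t) (Fin t) ℝ)
    (hK1 : K1ᵀ = K1) (hK2 : K2ᵀ = K2)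
    (hSigX : SigX.PosDef) (hSigT : SigT.PosDef)
    (hSigXdecomp : SigX = QX * ΛX * QXᵀ) (hSigTdecomp : SigT = QT * ΛT * QTᵀ)
    (hQX : QX * QXᵀ = 1) (hQT : QT * QTᵀ = 1)
    (hΛX : ΛX.IsDiag) (hΛT : ΛT.IsDiag)
    (hSX : SX.IsDiag) (hST : ST.IsDiag)
    (hSXsq : SX * SX = ΛX) (hSTsq : ST * ST = ΛT)
    (hSXinv : IsUnit SX.det) (hSTinv : IsUnit ST.det)
    (hQt1 : Qt1 * Qt1ᵀ = 1) (hQt2 : Qt2 * Qt2ᵀ = 1)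
    (hΛt1 : Λt1.IsDiag) (hΛt2 : Λt2.IsDiag)
    (hwhiten1 : Qt1 * Λt1 * Qt1ᵀ = SX⁻¹ * QXᵀ * K1 * QX * SX⁻¹)
    (hwhiten2 : Qt2 * Λt2 * Qt2ᵀ = ST⁻¹ * QTᵀ * K2 * QT * ST⁻¹)
    (hdiag : ∀ p, (Λt1 ⊗ₖ Λt2 + (1 : Matrix (Fin n × Fin t) (Fin n × Fin t) ℝ)) p p ≠ 0) :
    (K1 ⊗ₖ K2 + SigX ⊗ₖ SigT)⁻¹
      = (((QX * SX) ⊗ₖ (QT * ST))ᵀ)⁻¹ * (Qt1 ⊗ₖ Qt2) * (Λt1 ⊗ₖ Λt2 + 1)⁻¹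
          * (Qt1 ⊗ₖ Qt2)ᵀ * ((QX * SX) ⊗ₖ (QT * ST))⁻¹ := by
  -- basic facts
  have hSXs : SXᵀ = SX := hSX.isSymm
  have hSTs : STᵀ = ST := hST.isSymm
  have hSXi : SX * SX⁻¹ = 1 := mul_nonsing_inv _ hSXinv
  have hSXi' : SX⁻¹ * SX = 1 := nonsing_inv_mul _ hSXinv
  have hSTi : ST * ST⁻¹ = 1 := mul_nonsing_inv _ hSTinv
  have hSTi' : ST⁻¹ * ST = 1 := nonsing_inv_mul _ hSTinv
  have hQX' : QXᵀ * QX = 1 := mul_eq_one_comm.mp hQX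
  have hQT' : QTᵀ * QT = 1 := mul_eq_one_comm.mp hQT
  have hQt1' : Qt1ᵀ * Qt1 = 1 := mul_eq_one_comm.mp hQt1
  have hQt2' : Qt2ᵀ * Qt2 = 1 := mul_eq_one_comm.mp hQt2
  -- recover K1, K2
  have hK1' : K1 = (QX * SX * Qt1) * Λt1 * (QX * SX * Qt1)ᵀ := by
    have : QX * SX * (Qt1 * Λt1 * Qt1ᵀ) * SX * QXᵀ
        = QX * SX * (SX⁻¹ * QXᵀ * K1 * QX * SX⁻¹) * SX * QXᵀ := by rw [hwhiten1]
    calc K1 = QX * SX * (SX⁻¹ * QXᵀ * K1 * QX * SX⁻¹) * SX * QXᵀ := by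
              simp only [Matrix.mul_assoc]
              rw [show SX⁻¹ * (QXᵀ * (K1 * (QX * (SX⁻¹ * (SX * QXᵀ)))))
                    = SX⁻¹ * (QXᵀ * (K1 * (QX * ((SX⁻¹ * SX) * QXᵀ)))) by
                  simp only [Matrix.mul_assoc], hSXi', Matrix.one_mul]
              rw [show SX * (SX⁻¹ * (QXᵀ * (K1 * (QX * QXᵀ))))
                    = (SX * SX⁻¹) * (QXᵀ * (K1 * (QX * QXᵀ))) by simp only [Matrix.mul_assoc],
                hSXi, hQX, Matrix.one_mul, Matrix.mul_one]
              rw [show QX * (QXᵀ * K1) = (QX * QXᵀ) * K1 by simp only [Matrix.mul_assoc], hQX,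
                Matrix.one_mul]
      _ = QX * SX * (Qt1 * Λt1 * Qt1ᵀ) * SX * QXᵀ := this.symm
      _ = (QX * SX * Qt1) * Λt1 * (QX * SX * Qt1)ᵀ := by
            simp only [Matrix.transpose_mul, hSXs, Matrix.mul_assoc]
  have hK2' : K2 = (QT * ST * Qt2) * Λt2 * (QT * ST * Qt2)ᵀ := by
    have : QT * ST * (Qt2 * Λt2 * Qt2ᵀ) * ST * QTᵀ
        = QT * ST * (ST⁻¹ * QTᵀ * K2 * QT * ST⁻¹) * ST * QTᵀ := by rw [hwhiten2]
    calc K2 = QT * ST * (ST⁻¹ * QTᵀ * K2 * QT * ST⁻¹) * ST * QTᵀ := by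
              simp only [Matrix.mul_assoc]
              rw [show ST⁻¹ * (QTᵀ * (K2 * (QT * (ST⁻¹ * (ST * QTᵀ)))))
                    = ST⁻¹ * (QTᵀ * (K2 * (QT * ((ST⁻¹ * ST) * QTᵀ)))) by
                  simp only [Matrix.mul_assoc], hSTi', Matrix.one_mul]
              rw [show ST * (ST⁻¹ * (QTᵀ * (K2 * (QT * QTᵀ))))
                    = (ST * ST⁻¹) * (QTᵀ * (K2 * (QT * QTᵀ))) by simp only [Matrix.mul_assoc],
                hSTi, hQT, Matrix.one_mul, Matrix.mul_one]
              rw [show QT * (QTᵀ * K2) = (QT * QTᵀ) * K2 by simp only [Matrix.mul_assoc], hQT,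
                Matrix.one_mul]
      _ = QT * ST * (Qt2 * Λt2 * Qt2ᵀ) * ST * QTᵀ := this.symm
      _ = (QT * ST * Qt2) * Λt2 * (QT * ST * Qt2)ᵀ := by
            simp only [Matrix.transpose_mul, hSTs, Matrix.mul_assoc]
  -- Sigma decompositions via B
  have hSigX' : SigX = (QX * SX * Qt1) * 1 * (QX * SX * Qt1)ᵀ := by
    rw [hSigXdecomp, ← hSXsq]
    simp only [Matrix.mul_one, Matrix.transpose_mul, hSXs, Matrix.mul_assoc]
    rw [show Qt1 * (Qt1ᵀ * (SX * QXᵀ)) = (Qt1 * Qt1ᵀ) * (SX * QXᵀ) by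
      simp only [Matrix.mul_assoc], hQt1, Matrix.one_mul]
  have hSigT' : SigT = (QT * ST * Qt2) * 1 * (QT * ST * Qt2)ᵀ := by
    rw [hSigTdecomp, ← hSTsq]
    simp only [Matrix.mul_one, Matrix.transpose_mul, hSTs, Matrix.mul_assoc]
    rw [show Qt2 * (Qt2ᵀ * (ST * QTᵀ)) = (Qt2 * Qt2ᵀ) * (ST * QTᵀ) by
      simp only [Matrix.mul_assoc], hQt2, Matrix.one_mul]
  set B1 := QX * SX * Qt1 with hB1
  set B2 := QT * ST * Qt2 with hB2
  set D : Matrix (Fin n × Fin t) (Fin n × Fin t) ℝ := Λt1 ⊗ₖ Λt2 + 1 with hD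
  -- main factorization
  have hmain : K1 ⊗ₖ K2 + SigX ⊗ₖ SigT = (B1 ⊗ₖ B2) * D * (B1 ⊗ₖ B2)ᵀ := by
    rw [hK1', hK2', hSigX', hSigT', hD]
    simp only [mul_kronecker_mul, kroneckerMap_transpose, Matrix.mul_add, Matrix.add_mul,
      Matrix.mul_one, Matrix.one_mul, one_kronecker_one]
  -- invertibility
  have hDdiag : D.IsDiag := (hΛt1.kronecker hΛt2).add isDiag_one
  have hDdet : IsUnit D.det := by
    rw [← hDdiag.diagonal_diag, det_diagonal]
    exact isUnit_iff_ne_zero.mpr (Finset.prod_ne_zero_iff.mpr fun p _ => hdiag p)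
  have hB1det : IsUnit B1.det := by
    have h : B1 * (Qt1ᵀ * (SX⁻¹ * QXᵀ)) = 1 := by
      rw [hB1]
      simp only [Matrix.mul_assoc]
      rw [show Qt1 * (Qt1ᵀ * (SX⁻¹ * QXᵀ)) = (Qt1 * Qt1ᵀ) * (SX⁻¹ * QXᵀ) by
        simp only [Matrix.mul_assoc], hQt1, Matrix.one_mul,
        show SX * (SX⁻¹ * QXᵀ) = (SX * SX⁻¹) * QXᵀ by simp only [Matrix.mul_assoc],
        hSXi, Matrix.one_mul, hQX]
    exact isUnit_det_of_right_inverse h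
  have hB2det : IsUnit B2.det := by
    have h : B2 * (Qt2ᵀ * (ST⁻¹ * QTᵀ)) = 1 := by
      rw [hB2]
      simp only [Matrix.mul_assoc]
      rw [show Qt2 * (Qt2ᵀ * (ST⁻¹ * QTᵀ)) = (Qt2 * Qt2ᵀ) * (ST⁻¹ * QTᵀ) by
        simp only [Matrix.mul_assoc], hQt2, Matrix.one_mul,
        show ST * (ST⁻¹ * QTᵀ) = (ST * ST⁻¹) * QTᵀ by simp only [Matrix.mul_assoc],
        hSTi, Matrix.one_mul, hQT]
    exact isUnit_det_of_right_inverse h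
  -- now compute
  have hUinv : (Qt1 ⊗ₖ Qt2)⁻¹ = Qt1ᵀ ⊗ₖ Qt2ᵀ := by
    apply inv_eq_right_inv
    rw [← mul_kronecker_mul, hQt1, hQt2, one_kronecker_one]
  have hUinvT : (Qt1ᵀ ⊗ₖ Qt2ᵀ)⁻¹ = Qt1 ⊗ₖ Qt2 := by
    apply inv_eq_right_inv
    rw [← mul_kronecker_mul, hQt1', hQt2', one_kronecker_one]
  rw [hmain, Matrix.mul_inv_rev, Matrix.mul_inv_rev]
  rw [← kroneckerMap_transpose]
  have e1 : (B1ᵀ ⊗ₖ B2ᵀ)⁻¹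
      = ((QX * SX)ᵀ ⊗ₖ (QT * ST)ᵀ)⁻¹ * (Qt1 ⊗ₖ Qt2) := by
    rw [hB1, hB2, Matrix.transpose_mul (QX * SX) Qt1, Matrix.transpose_mul (QT * ST) Qt2,
      mul_kronecker_mul, Matrix.mul_inv_rev, hUinvT]
  have e2 : (B1 ⊗ₖ B2)⁻¹ = (Qt1 ⊗ₖ Qt2)ᵀ * ((QX * SX) ⊗ₖ (QT * ST))⁻¹ := by
    rw [hB1, hB2, show (QX * SX * Qt1) ⊗ₖ (QT * ST * Qt2)
        = ((QX * SX) ⊗ₖ (QT * ST)) * (Qt1 ⊗ₖ Qt2) by rw [← mul_kronecker_mul],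
      Matrix.mul_inv_rev, hUinv, ← kroneckerMap_transpose]
  rw [e1, e2, kroneckerMap_transpose, ← kroneckerMap_transpose _ Qt1 Qt2]
  simp only [Matrix.mul_assoc]
end
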